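/- arXiv:2201.01916 — 2 statements merged into one kernel-verified Lean document; each statement's English description precedes it below -/
import Mathlib

section
/- With Q_N as defined, if f is itself a trigonometric polynomial with frequencies in F_N = {ξ ∈ ℤ^d : −N/2 ≤ ξ_m < N/2}, i.e. f ∈ S_N, then Q_N f = f (Q_N is a projection onto S_N). -/
/-!
Averaging a single exponential `e^{2πi ζ·x}` over the cell `Y_I` multiplies its value at the
corner `I/N` by `Ĝ_N[ζ] e^{πi ζ·1/N}`; by discrete orthogonality the DFT of these samples at `ξ`
vanishes unless `ζ ≡ ξ (mod N)`. Distinct frequencies of `F_N` are incongruent mod `N`, so for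
`f ∈ S_N` one gets `f̂*[ξ] = Ĝ_N[ξ] e^{πi ξ·1/N} f̂[ξ]`, and `Ĝ_N[ξ] ≠ 0` on `F_N` because
`|π ξ_m / N| < π` there; `Q_N` divides out exactly these two factors.
-/

open Real MeasureTheory Filter Finset

noncomputable section

/-- The open unit cube `Y = (0,1)^d`. -/
def cube (d : ℕ) : Set (Fin d → ℝ) := {x | ∀ m, x m ∈ Set.Ioo (0 : ℝ) 1}

/-- The subcube `Y_I` of side `1/N` indexed by `I ∈ {0,…,N-1}^d`. -/
def cell (d N : ℕ) (I : Fin d → Fin N) : Set (Fin d → ℝ) :=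
  {x | ∀ m, (I m : ℝ) / N ≤ x m ∧ x m < ((I m : ℝ) + 1) / N}

/-- The cell average `f*[I] = ⨍_{Y_I} f`. -/
def cellAvg (d N : ℕ) (f : (Fin d → ℝ) → ℂ) (I : Fin d → Fin N) : ℂ :=
  (N : ℂ) ^ d * ∫ x in cell d N I, f x

/-- Identification of `j ∈ {0,…,N-1}` with a frequency in `[-N/2, N/2)`. -/
def freq (N : ℕ) (j : Fin N) : ℤ := if 2 * (j : ℕ) < N then (j : ℤ) else (j : ℤ) - N

/-- `e(z) = exp(2πi z)`. -/
def ee (z : ℂ) : ℂ := Complex.exp (2 * π * Complex.I * z)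

/-- The DFT of the cell averages of `f`:
`f̂*[ξ] = N^{-d} Σ_I f*[I] e^{-2πi I·ξ/N}`. -/
def dftAvg (d N : ℕ) (f : (Fin d → ℝ) → ℂ) (ξ : Fin d → ℤ) : ℂ :=
  ((N : ℂ) ^ d)⁻¹ * ∑ I : Fin d → Fin N, cellAvg d N f I *
    ee (-(∑ m, (I m : ℂ) * (ξ m : ℂ)) / N)

/-- The box-filter Fourier symbol `Ĝ_N[ξ] = ∏_m N sin(πξ_m/N)/(πξ_m)`. -/
def Ghat (d N : ℕ) (ξ : Fin d → ℤ) : ℝ :=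
  ∏ m, if ξ m = 0 then 1 else (N : ℝ) * Real.sin (π * ξ m / N) / (π * ξ m)

/-- The `ξ`-th Fourier coefficient `f̂[ξ] = ∫_Y f(x) e^{-2πi ξ·x} dx`. -/
def fCoeff (d : ℕ) (f : (Fin d → ℝ) → ℂ) (ξ : Fin d → ℤ) : ℂ :=
  ∫ x in cube d, f x * ee (-(∑ m, (ξ m : ℂ) * (x m : ℂ)))

/-- The quasi-interpolation operator
`Q_N f = Σ_{ξ∈F_N} Ĝ_N[ξ]⁻¹ e^{-πi ξ·1/N} f̂*[ξ] e^{2πi ξ·x}`. -/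
def QN (d N : ℕ) (f : (Fin d → ℝ) → ℂ) (x : Fin d → ℝ) : ℂ :=
  ∑ j : Fin d → Fin N,
    ((Ghat d N (fun m => freq N (j m)) : ℂ)⁻¹ *
      Complex.exp (-(π * Complex.I) * (∑ m, (freq N (j m) : ℂ)) / N)) *
      dftAvg d N f (fun m => freq N (j m)) *
      ee (∑ m, (freq N (j m) : ℂ) * (x m : ℂ))

/-- The `L²`-orthogonal projection onto the span of the exponentials with
frequencies in `F_N` (Fourier truncation). -/
def PN (d N : ℕ) (f : (Fin d → ℝ) → ℂ) (x : Fin d → ℝ) : ℂ :=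
  ∑ j : Fin d → Fin N,
    fCoeff d f (fun m => freq N (j m)) * ee (∑ m, (freq N (j m) : ℂ) * (x m : ℂ))

/-- Weak convergence in `L²(Y;ℂ)` of a sequence `g_N` to `g_∞`,
formulated by testing against every `L²` function. -/
def WeakL2 (d : ℕ) (g : ℕ → (Fin d → ℝ) → ℂ) (glim : (Fin d → ℝ) → ℂ) : Prop :=
  ∀ v : (Fin d → ℝ) → ℂ, MemLp v 2 (volume.restrict (cube d)) →
    Tendsto (fun N => ∫ x in cube d, g N x * (starRingEnd ℂ) (v x)) atTop
      (nhds (∫ x in cube d, glim x * (starRingEnd ℂ) (v x)))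

lemma ee_add (a b : ℂ) : ee (a + b) = ee a * ee b := by
  rw [ee, ee, ee, mul_add, Complex.exp_add]

lemma ee_sum {ι : Type*} (s : Finset ι) (f : ι → ℂ) :
    ee (∑ i ∈ s, f i) = ∏ i ∈ s, ee (f i) := by
  rw [ee, mul_sum, Complex.exp_sum]
  rfl

lemma ee_natCast_mul (n : ℕ) (z : ℂ) : ee (n * z) = ee z ^ n := by
  rw [ee, ee, ← Complex.exp_nat_mul]
  ring_nf

lemma ee_eq_one_iff (z : ℂ) : ee z = 1 ↔ ∃ n : ℤ, z = n := by
  have h2πI : 2 * π * Complex.I ≠ 0 := by simp [Real.pi_ne_zero, Complex.I_ne_zero]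
  rw [ee, Complex.exp_eq_one_iff]
  refine exists_congr fun n => ?_
  rw [mul_comm (n : ℂ), mul_right_inj' h2πI]

lemma ee_intCast (n : ℤ) : ee n = 1 :=
  (ee_eq_one_iff _).2 ⟨n, rfl⟩

lemma ee_sub_one (θ : ℂ) :
    ee θ - 1 = 2 * Complex.I * Complex.sin (π * θ) * Complex.exp (π * Complex.I * θ) := by
  have hsq : ee θ = Complex.exp (π * Complex.I * θ) ^ 2 := by
    rw [ee, ← Complex.exp_nat_mul]
    ring_nf
  rw [Complex.sin, hsq, show (π : ℂ) * θ * Complex.I = π * Complex.I * θ by ring,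
    show -((π : ℂ) * θ) * Complex.I = -(π * Complex.I * θ) by ring, Complex.exp_neg]
  field_simp
  linear_combination (Complex.exp (π * Complex.I * θ) ^ 2 - 1) * Complex.I_sq

lemma sum_fin_ee_mul_div (N : ℕ) (k : ℤ) :
    ∑ i : Fin N, ee ((i : ℂ) * k / N) = if (N : ℤ) ∣ k then (N : ℂ) else 0 := by
  rcases N.eq_zero_or_pos with rfl | hN
  · simp
  have hNC : (N : ℂ) ≠ 0 := Nat.cast_ne_zero.2 hN.ne'
  split_ifs with hdvd
  · obtain ⟨n, rfl⟩ := hdvd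
    have hone : ∀ i : Fin N, ee ((i : ℂ) * ((N * n : ℤ) : ℂ) / N) = 1 := fun i => by
      rw [← ee_intCast (i * n)]
      push_cast
      field_simp
    rw [Finset.sum_congr rfl fun i _ => hone i]
    simp
  · have hne : ee ((k : ℂ) / N) ≠ 1 := by
      rintro h
      obtain ⟨n, hn⟩ := (ee_eq_one_iff _).1 h
      refine hdvd ⟨n, ?_⟩
      rw [div_eq_iff hNC] at hn
      exact_mod_cast hn.trans (mul_comm _ _)
    have hpow : ∀ i : ℕ, ee ((i : ℂ) * k / N) = ee ((k : ℂ) / N) ^ i := fun i => by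
      rw [← ee_natCast_mul, mul_div_assoc]
    rw [Fin.sum_univ_eq_sum_range (fun i => ee ((i : ℂ) * k / N)), Finset.sum_congr rfl
      fun i _ => hpow i, geom_sum_eq hne, ← ee_natCast_mul, mul_div_cancel₀ _ hNC, ee_intCast,
      sub_self, zero_div]

def boxSymbol (N : ℕ) (k : ℤ) : ℝ :=
  if k = 0 then 1 else (N : ℝ) * Real.sin (π * k / N) / (π * k)

lemma Ghat_eq_prod_boxSymbol (d N : ℕ) (ξ : Fin d → ℤ) :
    Ghat d N ξ = ∏ m, boxSymbol N (ξ m) := rfl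

lemma boxSymbol_ne_zero {N : ℕ} {k : ℤ} (hk : |k| < N) : boxSymbol N k ≠ 0 := by
  rw [boxSymbol]
  split_ifs with hk0
  · exact one_ne_zero
  have hN : (0 : ℝ) < N := by exact_mod_cast (abs_nonneg k).trans_lt hk
  have hkR : |(k : ℝ)| < N := by exact_mod_cast hk
  have hsin : Real.sin (π * k / N) ≠ 0 := by
    rw [abs_lt] at hkR
    have hlt : π * k / N < π := by
      rw [div_lt_iff₀ hN]; nlinarith [Real.pi_pos]
    have hgt : -π < π * k / N := by
      rw [lt_div_iff₀ hN]; nlinarith [Real.pi_pos]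
    rw [Ne, Real.sin_eq_zero_iff_of_lt_of_lt hgt hlt]
    simp [Real.pi_ne_zero, hk0, hN.ne']
  have hkR0 : (k : ℝ) ≠ 0 := Int.cast_ne_zero.2 hk0
  exact div_ne_zero (mul_ne_zero hN.ne' hsin) (mul_ne_zero Real.pi_ne_zero hkR0)

lemma natCast_mul_integral_Ico_ee {N : ℕ} (hN : 0 < N) (k : ℤ) (a : ℝ) :
    (N : ℂ) * ∫ t in Set.Ico (a / N) ((a + 1) / N), ee (k * t) =
      boxSymbol N k * Complex.exp (π * Complex.I * k / N) * ee (k * a / N) := by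
  have hNC : (N : ℂ) ≠ 0 := Nat.cast_ne_zero.2 hN.ne'
  have hab : a / N ≤ (a + 1) / N := by gcongr; linarith
  rw [setIntegral_congr_set Ico_ae_eq_Ioc, ← intervalIntegral.integral_of_le hab]
  by_cases hk : k = 0
  · subst hk
    simp only [Int.cast_zero, zero_mul, zero_div, mul_zero, Complex.exp_zero, ee,
      intervalIntegral.integral_const, boxSymbol, if_true, Complex.ofReal_one, mul_one]
    rw [Complex.real_smul, show (a + 1) / N - a / N = 1 / N by ring]
    push_cast
    field_simp
  have hkC : (k : ℂ) ≠ 0 := Int.cast_ne_zero.2 hk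
  have hc : 2 * π * Complex.I * k ≠ 0 := by simp [Real.pi_ne_zero, Complex.I_ne_zero, hkC]
  have hee : ∀ t : ℝ, ee (k * t) = Complex.exp (2 * π * Complex.I * k * t) := fun t => by
    rw [ee, ← mul_assoc]
  have hdiff : Complex.exp (2 * π * Complex.I * k * ((a + 1) / N : ℝ)) -
      Complex.exp (2 * π * Complex.I * k * (a / N : ℝ)) = ee (k * a / N) * (ee (k / N) - 1) := by
    rw [mul_sub_one, ← ee_add, ee, ee]
    push_cast
    ring_nf
  simp only [hee]
  rw [integral_exp_mul_complex hc, hdiff, ee_sub_one, boxSymbol, if_neg hk]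
  push_cast
  field_simp

def expMode {d : ℕ} (ξ : Fin d → ℤ) (x : Fin d → ℝ) : ℂ :=
  ee (∑ m, (ξ m : ℂ) * (x m : ℂ))

lemma continuous_expMode {d : ℕ} (ξ : Fin d → ℤ) : Continuous (expMode ξ) := by
  unfold expMode ee
  fun_prop

lemma cell_eq_pi (d N : ℕ) (I : Fin d → Fin N) :
    cell d N I = Set.univ.pi fun m => Set.Ico ((I m : ℝ) / N) (((I m : ℝ) + 1) / N) := by
  ext x
  simp [cell, Set.mem_pi, Set.mem_Ico]

lemma Continuous.integrableOn_cell {d N : ℕ} {f : (Fin d → ℝ) → ℂ} (hf : Continuous f)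
    (I : Fin d → Fin N) : IntegrableOn f (cell d N I) := by
  rw [cell_eq_pi]
  exact (hf.integrableOn_Icc (a := fun m => (I m : ℝ) / N)
    (b := fun m => ((I m : ℝ) + 1) / N)).mono_set fun x hx => by
      simp only [Set.mem_pi, Set.mem_univ, Set.mem_Ico, forall_const] at hx
      exact ⟨fun m => (hx m).1, fun m => (hx m).2.le⟩

lemma integral_cell_prod {d N : ℕ} (I : Fin d → Fin N) (f : Fin d → ℝ → ℂ) :
    ∫ x in cell d N I, ∏ m, f m (x m) =
      ∏ m, ∫ t in Set.Ico ((I m : ℝ) / N) (((I m : ℝ) + 1) / N), f m t := by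
  rw [cell_eq_pi, volume_pi, Measure.restrict_pi_pi, integral_fintype_prod_eq_prod]

lemma cellAvg_expMode {d N : ℕ} (hN : 0 < N) (ξ : Fin d → ℤ) (I : Fin d → Fin N) :
    cellAvg d N (expMode ξ) I =
      Ghat d N ξ * Complex.exp (π * Complex.I * (∑ m, (ξ m : ℂ)) / N) *
        ee ((∑ m, (I m : ℂ) * ξ m) / N) := by
  have hprod : ∀ x, expMode ξ x = ∏ m, ee (ξ m * x m) := fun x => ee_sum _ _
  simp only [cellAvg, hprod]
  rw [integral_cell_prod I fun m t => ee (ξ m * t), ← Fin.prod_const, ← Finset.prod_mul_distrib,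
    Finset.prod_congr rfl fun m _ => natCast_mul_integral_Ico_ee hN (ξ m) (I m),
    Finset.prod_mul_distrib, Finset.prod_mul_distrib, Ghat_eq_prod_boxSymbol,
    Complex.ofReal_prod, ← Complex.exp_sum, Finset.sum_div, ← ee_sum, Finset.mul_sum,
    Finset.sum_div]
  push_cast
  simp only [mul_comm (ξ _ : ℂ)]

/-- Discrete orthogonality of the characters `I ↦ ee (I · ξ / N)` of `(ℤ / N)^d`. -/
lemma sum_ee_mul_ee_neg {d N : ℕ} (ζ ξ : Fin d → ℤ) :
    ∑ I : Fin d → Fin N,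
        ee ((∑ m, (I m : ℂ) * ζ m) / N) * ee (-(∑ m, (I m : ℂ) * ξ m) / N) =
      if ∀ m, (N : ℤ) ∣ ζ m - ξ m then (N : ℂ) ^ d else 0 := by
  have hterm : ∀ I : Fin d → Fin N,
      ee ((∑ m, (I m : ℂ) * ζ m) / N) * ee (-(∑ m, (I m : ℂ) * ξ m) / N) =
        ∏ m, ee ((I m : ℂ) * ((ζ m - ξ m : ℤ) : ℂ) / N) := fun I => by
    rw [← ee_add, ← ee_sum]
    congr 1
    simp only [neg_div, Finset.sum_div, ← sub_eq_add_neg, ← Finset.sum_sub_distrib]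
    push_cast
    exact Finset.sum_congr rfl fun m _ => by ring
  rw [Finset.sum_congr rfl fun I _ => hterm I,
    ← Fintype.prod_sum fun m (i : Fin N) => ee ((i : ℂ) * ((ζ m - ξ m : ℤ) : ℂ) / N)]
  simp only [sum_fin_ee_mul_div, Fintype.prod_ite_zero, Finset.prod_const, Finset.card_univ,
    Fintype.card_fin]

lemma dftAvg_expMode {d N : ℕ} (hN : 0 < N) (ζ ξ : Fin d → ℤ) :
    dftAvg d N (expMode ζ) ξ =
      if ∀ m, (N : ℤ) ∣ ζ m - ξ m then
        Ghat d N ζ * Complex.exp (π * Complex.I * (∑ m, (ζ m : ℂ)) / N) else 0 := by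
  have hNd : (N : ℂ) ^ d ≠ 0 := pow_ne_zero _ (Nat.cast_ne_zero.2 hN.ne')
  simp only [dftAvg, cellAvg_expMode hN, mul_assoc, ← Finset.mul_sum, sum_ee_mul_ee_neg]
  split_ifs
  · field_simp
  · simp

lemma two_mul_freq_mem (N : ℕ) (j : Fin N) : -(N : ℤ) ≤ 2 * freq N j ∧ 2 * freq N j < N := by
  have := j.isLt
  unfold freq
  split_ifs <;> omega

lemma abs_freq_lt {N : ℕ} (j : Fin N) : |freq N j| < N := by
  have := two_mul_freq_mem N j
  have := j.pos
  rw [abs_lt]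
  omega

lemma natCast_dvd_freq_sub_freq_iff {N : ℕ} {a b : Fin N} :
    (N : ℤ) ∣ freq N a - freq N b ↔ a = b := by
  refine ⟨fun h => ?_, fun h => h ▸ by simp⟩
  have ha := two_mul_freq_mem N a
  have hb := two_mul_freq_mem N b
  have h0 : freq N a - freq N b = 0 := Int.eq_zero_of_abs_lt_dvd h (by rw [abs_lt]; omega)
  have := a.isLt
  have := b.isLt
  unfold freq at h0
  split_ifs at h0 <;> (apply Fin.ext; omega)

lemma Ghat_freq_ne_zero {d N : ℕ} (j : Fin d → Fin N) :
    Ghat d N (fun m => freq N (j m)) ≠ 0 :=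
  Finset.prod_ne_zero_iff.2 fun m _ => boxSymbol_ne_zero (abs_freq_lt (j m))

lemma dftAvg_expMode_freq {d N : ℕ} (hN : 0 < N) (j' j : Fin d → Fin N) :
    dftAvg d N (expMode fun m => freq N (j' m)) (fun m => freq N (j m)) =
      if j' = j then
        Ghat d N (fun m => freq N (j m)) *
          Complex.exp (π * Complex.I * (∑ m, (freq N (j m) : ℂ)) / N) else 0 := by
  simp only [dftAvg_expMode hN, natCast_dvd_freq_sub_freq_iff, ← funext_iff]
  split_ifs with h <;> simp [h]

lemma dftAvg_sum_mul {d N : ℕ} {ι : Type*} (s : Finset ι) (c : ι → ℂ)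
    (g : ι → (Fin d → ℝ) → ℂ) (hg : ∀ i ∈ s, ∀ I, IntegrableOn (g i) (cell d N I))
    (ξ : Fin d → ℤ) :
    dftAvg d N (fun x => ∑ i ∈ s, c i * g i x) ξ = ∑ i ∈ s, c i * dftAvg d N (g i) ξ := by
  have hcell : ∀ I, cellAvg d N (fun x => ∑ i ∈ s, c i * g i x) I =
      ∑ i ∈ s, c i * cellAvg d N (g i) I := fun I => by
    rw [cellAvg, integral_finsetSum s fun i hi => (hg i hi I).const_mul (c i), Finset.mul_sum]
    simp only [cellAvg, integral_const_mul]
    exact Finset.sum_congr rfl fun i _ => by ring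
  simp only [dftAvg, hcell, Finset.sum_mul, Finset.mul_sum]
  rw [Finset.sum_comm]
  exact Finset.sum_congr rfl fun i _ => Finset.sum_congr rfl fun I _ => by ring

/-- `Q_N` is a projection: if `f` is a trigonometric polynomial with frequencies in
`F_N`, i.e. `f ∈ S_N`, then `Q_N f = f`. -/
theorem QN_proj (d N : ℕ) (hN : 0 < N) (c : (Fin d → Fin N) → ℂ)
    (f : (Fin d → ℝ) → ℂ)
    (hf : ∀ x, f x = ∑ j : Fin d → Fin N,
      c j * ee (∑ m, (freq N (j m) : ℂ) * (x m : ℂ))) :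
    ∀ x, QN d N f x = f x := by
  intro x
  have hf_eq : f = fun x => ∑ j, c j * expMode (fun m => freq N (j m)) x := funext hf
  have hdft : ∀ j, dftAvg d N f (fun m => freq N (j m)) = c j *
      (Ghat d N (fun m => freq N (j m)) *
        Complex.exp (π * Complex.I * (∑ m, (freq N (j m) : ℂ)) / N)) := fun j => by
    rw [hf_eq, dftAvg_sum_mul _ _ _ fun j' _ => (continuous_expMode _).integrableOn_cell]
    simp [dftAvg_expMode_freq hN]
  rw [QN, hf x]
  refine Finset.sum_congr rfl fun j _ => ?_
  have hG : (Ghat d N (fun m => freq N (j m)) : ℂ) ≠ 0 :=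
    Complex.ofReal_ne_zero.2 (Ghat_freq_ne_zero j)
  rw [hdft j, neg_mul, neg_div, Complex.exp_neg]
  field_simp

end
end

section
/- (Quadratic error for effective coefficients.) In the setting of the FEM scheme, with u the exact corrector, u_N the finite element corrector, ε = ∇ˢu + E, and the energies E:C^eff:E = ⟨(∇ˢu+E):C:(∇ˢu+E)⟩ and E:C_N^{eff,F}:E = ⟨(∇ˢu_N+E):C_N:(∇ˢu_N+E)⟩, one has the algebraic decomposition E:(C_N^{eff,F} − C^eff):E = ⟨∇ˢ(u_N−u):C_N:∇ˢ(u_N−u)⟩ + 2⟨∇ˢ(u_N−u):C:(∇ˢu+E)⟩ + 2⟨∇ˢ(u_N−u):(C_N−C):(∇ˢu+E)⟩ + ⟨ε:(C_N−C):ε⟩, and the second term vanishes. Consequently, if ‖∇ˢ(u_N−u)‖_{L²} ≤ C N^{−1/2}√(E:E), ‖ε‖_{L^∞} ≤ C√(E:E), and ‖(C−C_N):ε‖_{L²} ≤ C N^{−1/2}√(E:E), then |E:(C^eff − C_N^{eff,F}):E| ≤ C N^{−1}(E:E). -/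
/-!
Write `G u_N + e = δ + ε` with `δ = G u_N - G u` and `ε = G u + e`. Expanding the discrete energy
with the symmetry of `B_N` gives the four-term decomposition, and `⟪δ, B ε⟫ = 0` is Galerkin
orthogonality (the corrector equation tested with `u_N - u`). The terms `⟪δ, B_N δ⟫` and
`⟪δ, (B_N - B) ε⟫` are products of two factors of size `N^{-1/2} ‖e‖`, hence `O(N⁻¹ ‖e‖²)`.
-/

open RealInnerProductSpace

section

variable {X : Type*} [NormedAddCommGroup X] [InnerProductSpace ℝ X]

theorem LinearMap.IsSymmetric.inner_add_map_add_sub_inner_map {BN : X →ₗ[ℝ] X}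
    (hBN : BN.IsSymmetric) (B : X →ₗ[ℝ] X) (δ ε : X) :
    ⟪δ + ε, BN (δ + ε)⟫ - ⟪ε, B ε⟫ =
      ⟪δ, BN δ⟫ + 2 * ⟪δ, B ε⟫ + 2 * ⟪δ, (BN - B) ε⟫ + ⟪ε, (BN - B) ε⟫ := by
  have hcross : ⟪ε, BN δ⟫ = ⟪δ, BN ε⟫ := by rw [← hBN, real_inner_comm]
  simp only [map_add, LinearMap.sub_apply, inner_add_left, inner_add_right, inner_sub_right,
    hcross]
  ring

theorem abs_real_inner_apply_le {Λ : ℝ} {T : X → X} (hT : ∀ s, ‖T s‖ ≤ Λ * ‖s‖) (x y : X) :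
    |⟪x, T y⟫| ≤ Λ * (‖x‖ * ‖y‖) :=
  calc |⟪x, T y⟫| ≤ ‖x‖ * ‖T y‖ := abs_real_inner_le_norm x (T y)
    _ ≤ ‖x‖ * (Λ * ‖y‖) := mul_le_mul_of_nonneg_left (hT y) (norm_nonneg x)
    _ = Λ * (‖x‖ * ‖y‖) := by ring

theorem mul_le_of_le_mul_rpow_neg_half {x a b c r : ℝ} (hx : 0 < x) (ha₀ : 0 ≤ a)
    (ha : a ≤ c * x ^ (-(1 / 2) : ℝ) * r) (hb : b ≤ c * x ^ (-(1 / 2) : ℝ) * r) :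
    a * b ≤ c ^ 2 * x⁻¹ * r ^ 2 := by
  set K := c * x ^ (-(1 / 2) : ℝ) * r
  have hK : K * K = c ^ 2 * x⁻¹ * r ^ 2 := by
    rw [show K * K = c ^ 2 * (x ^ (-(1 / 2) : ℝ) * x ^ (-(1 / 2) : ℝ)) * r ^ 2 by ring,
      ← Real.rpow_add hx]
    norm_num [Real.rpow_neg_one]
  calc a * b ≤ a * K := mul_le_mul_of_nonneg_left hb ha₀
    _ ≤ K * K := mul_le_mul_of_nonneg_right ha (ha₀.trans ha)
    _ = c ^ 2 * x⁻¹ * r ^ 2 := hK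

end

/-- Quadratic error for the effective coefficients of the FEM scheme.  Abstractly,
`X` is the space of `L²` strain fields, `G : H →ₗ X` the symmetric gradient,
`B, B_N : X →ₗ X` multiplication by the stiffness tensors `C, C_N` (with major
symmetry), `e ∈ X` the constant strain `E` (so `√(E:E) = ‖e‖`), `u` the exact
corrector, `u_N` the finite element corrector, and `ε = Gu + e`.  Then, writing
`δ = Gu_N − Gu`, one has the algebraic decomposition
`E:(C_N^{eff,F} − C^eff):E = ⟪δ, B_N δ⟫ + 2⟪δ, B ε⟫ + 2⟪δ, (B_N − B) ε⟫ + ⟪ε, (B_N − B) ε⟫`,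
the second term `2⟪δ, B ε⟫` vanishes, and under the stated `O(N^{-1/2})` bounds the
energy error satisfies `|E:(C^eff − C_N^{eff,F}):E| ≤ C·N⁻¹·‖e‖²`. -/
theorem effective_coefficient_quadratic_error (Λ'' C₁ : ℝ) (hΛ'' : 0 < Λ'') (hC₁ : 0 < C₁) :
    ∃ C : ℝ, 0 < C ∧
      ∀ (H X : Type) (_ : NormedAddCommGroup H) (_ : InnerProductSpace ℝ H)
        (_ : NormedAddCommGroup X) (_ : InnerProductSpace ℝ X),
        ∀ (G : H →ₗ[ℝ] X) (B BN : X →ₗ[ℝ] X) (e : X) (u uN : H) (N : ℕ), 0 < N →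
          (∀ s t : X, (inner ℝ s (B t) : ℝ) = (inner ℝ (B s) t : ℝ)) →
          (∀ s t : X, (inner ℝ s (BN t) : ℝ) = (inner ℝ (BN s) t : ℝ)) →
          (∀ s : X, ‖BN s‖ ≤ Λ'' * ‖s‖) →
          (∀ v : H, (inner ℝ (G v) (B (G u + e)) : ℝ) = 0) →
          ‖G uN - G u‖ ≤ C₁ * ((N : ℝ) ^ (-(1 / 2) : ℝ)) * ‖e‖ →
          ‖G u + e‖ ≤ C₁ * ‖e‖ →
          ‖(BN - B) (G u + e)‖ ≤ C₁ * ((N : ℝ) ^ (-(1 / 2) : ℝ)) * ‖e‖ →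
          |(inner ℝ (G u + e) ((BN - B) (G u + e)) : ℝ)| ≤ C₁ * (N : ℝ)⁻¹ * ‖e‖ ^ 2 →
          ((inner ℝ (G uN + e) (BN (G uN + e)) : ℝ) -
              (inner ℝ (G u + e) (B (G u + e)) : ℝ) =
            (inner ℝ (G uN - G u) (BN (G uN - G u)) : ℝ) +
              2 * (inner ℝ (G uN - G u) (B (G u + e)) : ℝ) +
              2 * (inner ℝ (G uN - G u) ((BN - B) (G u + e)) : ℝ) +
              (inner ℝ (G u + e) ((BN - B) (G u + e)) : ℝ)) ∧
          (inner ℝ (G uN - G u) (B (G u + e)) : ℝ) = 0 ∧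
          |(inner ℝ (G uN + e) (BN (G uN + e)) : ℝ) -
              (inner ℝ (G u + e) (B (G u + e)) : ℝ)| ≤ C * (N : ℝ)⁻¹ * ‖e‖ ^ 2 := by
  
  refine ⟨Λ'' * C₁ ^ 2 + 2 * C₁ ^ 2 + C₁, by positivity, ?_⟩
  intro H X _ _ _ _ G B BN e u uN N hN _ hBN hBNbd horth hδ _ hdiff hεε
  have hN' : (0 : ℝ) < N := by exact_mod_cast hN
  have hsplit : G uN + e = (G uN - G u) + (G u + e) := by abel
  have hdec := LinearMap.IsSymmetric.inner_add_map_add_sub_inner_map (fun s t ↦ (hBN s t).symm)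
    B (G uN - G u) (G u + e)
  rw [← hsplit] at hdec
  have horth' : ⟪G uN - G u, B (G u + e)⟫ = 0 := by simpa using horth (uN - u)
  refine ⟨hdec, horth', ?_⟩
  rw [hdec, horth']
  have hδδ := mul_le_of_le_mul_rpow_neg_half hN' (norm_nonneg _) hδ hδ
  have hδd := mul_le_of_le_mul_rpow_neg_half hN' (norm_nonneg _) hδ hdiff
  have hΛδδ := mul_le_mul_of_nonneg_left hδδ hΛ''.le
  have h₁ := abs_le.mp (abs_real_inner_apply_le hBNbd (G uN - G u) (G uN - G u))
  have h₃ := abs_le.mp (abs_real_inner_le_norm (G uN - G u) ((BN - B) (G u + e)))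
  have h₄ := abs_le.mp hεε
  rw [abs_le]
  constructor <;> linarith [h₁.1, h₁.2, h₃.1, h₃.2, h₄.1, h₄.2]
end
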